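/- arXiv:1202.6383 — 2 statements merged into one kernel-verified Lean document; each statement's English description precedes it below -/
import Mathlib

section
/- If T is a linear operator on the tangent space of an almost paracontact metric manifold that is both g-antisymmetric of the form (2n−2)(k+1)φ and g-symmetric of the form (2n−2)φh − Tr(φh)(h − φ²), and these two expressions are equal pointwise, then with n > 1 one concludes k = −1 and (taking traces, using Tr h = 0, Tr(φh) computations, and φh + hφ = 0) φh = 0, hence h = 0. -/
/-- An abstract (algebraic) model of an almost paracontact metric manifold:
`V` plays the role of the ℝ-module of vector fields on a (2n+1)-dimensional
manifold `M`, equipped with the Lie bracket of vector fields, the Levi-Civita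
connection `nabla`, the (pointwise evaluated) pseudo-Riemannian metric `g` and
the structure tensors `(phi, xi, eta)` subject to the defining identities of an
almost paracontact metric structure. -/
structure APCM (V : Type*) [AddCommGroup V] [Module ℝ V] where
  n : ℕ
  phi : V →ₗ[ℝ] V
  xi : V
  eta : V →ₗ[ℝ] ℝ
  g : V →ₗ[ℝ] V →ₗ[ℝ] ℝ
  bracket : V → V → V
  nabla : V → V → V
  g_symm : ∀ X Y, g X Y = g Y X
  g_nondeg : ∀ X, (∀ Y, g X Y = 0) → X = 0
  phi_sq : ∀ X, phi (phi X) = X - eta X • xi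
  eta_xi : eta xi = 1
  phi_xi : phi xi = 0
  eta_phi : ∀ X, eta (phi X) = 0
  compat : ∀ X Y, g (phi X) (phi Y) = - g X Y + eta X * eta Y
  eta_g : ∀ X, eta X = g X xi
  bracket_skew : ∀ X Y, bracket X Y = - bracket Y X
  nabla_add_left : ∀ X Y Z, nabla (X + Y) Z = nabla X Z + nabla Y Z
  nabla_add_right : ∀ X Y Z, nabla X (Y + Z) = nabla X Y + nabla X Z
  nabla_smul_left : ∀ (a : ℝ) (X Y : V), nabla (a • X) Y = a • nabla X Y
  nabla_smul_right : ∀ (a : ℝ) (X Y : V), nabla X (a • Y) = a • nabla X Y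
  torsion_free : ∀ X Y, nabla X Y - nabla Y X = bracket X Y
  /-- `dη(U,V) = −(1/2)η([U,V])` for `U, V` in the paracontact distribution,
  i.e. `(∇_U η)(V) − (∇_V η)(U) = −η([U,V])`. -/
  deta_bracket : ∀ X Y, eta X = 0 → eta Y = 0 →
    g (nabla X xi) Y - g (nabla Y xi) X = - eta (bracket X Y)

noncomputable section
namespace APCM

variable {V : Type*} [AddCommGroup V] [Module ℝ V] (P : APCM V)

/-- `(∇_X η)(Y) = g(∇_X ξ, Y)`. -/
def nablaEta (X Y : V) : ℝ := P.g (P.nabla X P.xi) Y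

/-- `(∇_X φ)Y = ∇_X(φY) − φ(∇_X Y)`. -/
def nablaPhi (X Y : V) : V := P.nabla X (P.phi Y) - P.phi (P.nabla X Y)

/-- `dη(X,Y) = (1/2)((∇_X η)(Y) − (∇_Y η)(X))`. -/
def deta (X Y : V) : ℝ := (1/2) * (P.nablaEta X Y - P.nablaEta Y X)

/-- Membership in the paracontact distribution `D = Ker η`. -/
def inD (X : V) : Prop := P.eta X = 0

/-- Membership in `D⁺`, the (+1)-eigendistribution of `φ|_D`. -/
def inDplus (X : V) : Prop := P.eta X = 0 ∧ P.phi X = X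

/-- Membership in `D⁻`, the (−1)-eigendistribution of `φ|_D`. -/
def inDminus (X : V) : Prop := P.eta X = 0 ∧ P.phi X = - X

/-- The structure is para-CR iff both eigendistributions `D⁺`, `D⁻` are involutive. -/
def IsParaCR : Prop :=
  (∀ X Y, P.inDplus X → P.inDplus Y → P.inDplus (P.bracket X Y)) ∧
  (∀ X Y, P.inDminus X → P.inDminus Y → P.inDminus (P.bracket X Y))

/-- Paracontact metric: `Φ = dη` where `Φ(X,Y) = g(X, φY)`. -/
def IsParacontact : Prop := ∀ X Y, P.g X (P.phi Y) = P.deta X Y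

/-- `h = (1/2) L_ξ φ`, i.e. `hX = (1/2)([ξ, φX] − φ[ξ, X])`. -/
def hten (X : V) : V := (1/2 : ℝ) • (P.bracket P.xi (P.phi X) - P.phi (P.bracket P.xi X))

/-- `(∇_X h)Y = ∇_X(hY) − h(∇_X Y)`. -/
def nablaH (X Y : V) : V := P.nabla X (P.hten Y) - P.hten (P.nabla X Y)

/-- The Riemann curvature operator `R(W,X)Y`. -/
def R (W X Y : V) : V :=
  P.nabla W (P.nabla X Y) - P.nabla X (P.nabla W Y) - P.nabla (P.bracket W X) Y

/-- Normality: `φ(∇_X φ)Y − (∇_{φX} φ)Y + ((∇_X η)Y)ξ = 0` for all `X, Y`. -/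
def IsNormal : Prop :=
  ∀ X Y, P.phi (P.nablaPhi X Y) - P.nablaPhi (P.phi X) Y + P.nablaEta X Y • P.xi = 0

/-- Para-Sasakian: `(∇_X φ)Y = −g(X,Y)ξ + η(Y)X`. -/
def IsParaSasakian : Prop :=
  ∀ X Y, P.nablaPhi X Y = -(P.g X Y) • P.xi + P.eta Y • X

end APCM
end

/-- If a linear operator on an almost paracontact metric manifold
is simultaneously the g-antisymmetric operator `(2n−2)(k+1)φ` and the
g-symmetric operator `(2n−2)φh − Tr(φh)(h − φ²)` (where `h` has the usual
properties: g-symmetric, `φh + hφ = 0`, `Tr h = 0`, `hξ = 0`, `η∘h = 0`),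
then for `n > 1` one concludes `k = −1`, `φh = 0` and hence `h = 0`. -/
theorem stmt12 {V : Type*} [AddCommGroup V] [Module ℝ V] [FiniteDimensional ℝ V]
    (P : APCM V) (hdim : Module.finrank ℝ V = 2 * P.n + 1) (hn : 1 < P.n)
    (k : ℝ) (hL : V →ₗ[ℝ] V)
    (hsymm : ∀ X Y, P.g (hL X) Y = P.g X (hL Y))
    (hphih : ∀ X, P.phi (hL X) + hL (P.phi X) = 0)
    (htr : LinearMap.trace ℝ V hL = 0)
    (hxi : hL P.xi = 0)
    (heta : ∀ X, P.eta (hL X) = 0)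
    (heq : ∀ X, ((2 * (P.n : ℝ) - 2) * (k + 1)) • P.phi X
        = (2 * (P.n : ℝ) - 2) • P.phi (hL X)
          - (LinearMap.trace ℝ V (P.phi ∘ₗ hL)) • (hL X - P.phi (P.phi X))) :
    k = -1 ∧ (∀ X, P.phi (hL X) = 0) ∧ hL = 0 := by
  classical
  set t := LinearMap.trace ℝ V (P.phi ∘ₗ hL) with ht
  have hnR : (2 : ℝ) ≤ (P.n : ℝ) := by exact_mod_cast hn
  have hfac : (2 * (P.n : ℝ) - 2) ≠ 0 := by nlinarith
  -- g(φX, Y) = -g(X, φY)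
  have hgphi : ∀ X Y, P.g (P.phi X) Y = - P.g X (P.phi Y) := by
    intro X Y
    have h1 := P.compat X (P.phi Y)
    rw [P.phi_sq Y, map_sub, map_smul] at h1
    have h3 : P.g (P.phi X) P.xi = 0 := by rw [← P.eta_g]; exact P.eta_phi X
    rw [h3, P.eta_phi Y] at h1
    simpa using h1
  -- g(φ(hX),Y) = g(X, φ(hY))
  have hBsymm1 : ∀ X Y, P.g (P.phi (hL X)) Y = P.g X (P.phi (hL Y)) := by
    intro X Y
    have hh : hL (P.phi Y) = - P.phi (hL Y) := by
      have := hphih Y; linear_combination (norm := module) this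
    rw [hgphi, hsymm, hh, map_neg, neg_neg]
  -- g(φφX,Y) = g(X, φφY)
  have hBsymm2 : ∀ X Y, P.g (P.phi (P.phi X)) Y = P.g X (P.phi (P.phi Y)) := by
    intro X Y
    rw [hgphi, hgphi, neg_neg]
  -- the operator is both symmetric and antisymmetric, hence zero
  have hA0 : ∀ X, ((2 * (P.n : ℝ) - 2) * (k + 1)) • P.phi X = 0 := by
    intro X
    apply P.g_nondeg
    intro Y
    have e1 : P.g (((2 * (P.n : ℝ) - 2) * (k + 1)) • P.phi X) Y
        = - P.g X (((2 * (P.n : ℝ) - 2) * (k + 1)) • P.phi Y) := by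
      rw [LinearMap.map_smul₂, map_smul, hgphi]
      simp only [smul_eq_mul]
      ring
    have e2 : P.g (((2 * (P.n : ℝ) - 2) * (k + 1)) • P.phi X) Y
        = P.g X (((2 * (P.n : ℝ) - 2) * (k + 1)) • P.phi Y) := by
      rw [heq X, heq Y]
      simp only [map_sub, map_smul, LinearMap.map_smul₂, LinearMap.sub_apply,
        LinearMap.smul_apply, smul_eq_mul]
      rw [hBsymm1, hsymm, hBsymm2]
    linarith [e1, e2]
  -- trace of the rank-one map X ↦ η(X) • ξ is η(ξ) = 1
  have htr_rank1 : LinearMap.trace ℝ V (P.eta.smulRight P.xi) = 1 := by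
    have h1 : P.eta.smulRight P.xi = dualTensorHom ℝ V V (P.eta ⊗ₜ[ℝ] P.xi) := by
      ext X; simp [dualTensorHom_apply]
    rw [h1]
    have := LinearMap.congr_fun (LinearMap.trace_eq_contract ℝ V) (P.eta ⊗ₜ[ℝ] P.xi)
    simpa [P.eta_xi] using this
  -- k = -1
  have hk : k = -1 := by
    by_contra hk
    have hc : (2 * (P.n : ℝ) - 2) * (k + 1) ≠ 0 := by
      apply mul_ne_zero hfac
      intro h; apply hk; linarith
    have hphi0 : ∀ X, P.phi X = 0 := by
      intro X
      have := hA0 X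
      rcases smul_eq_zero.mp this with h | h
      · exact absurd h hc
      · exact h
    have hid : (LinearMap.id : V →ₗ[ℝ] V) = P.eta.smulRight P.xi := by
      ext X
      have := P.phi_sq X
      simp only [hphi0] at this
      simp only [LinearMap.id_coe, id_eq, LinearMap.smulRight_apply]
      linear_combination (norm := module) - this
    have h1 : LinearMap.trace ℝ V (LinearMap.id : V →ₗ[ℝ] V) = 1 := by
      rw [hid]; exact htr_rank1
    rw [LinearMap.trace_id, hdim] at h1
    have : (2 * P.n + 1 : ℝ) = 1 := by exact_mod_cast h1
    nlinarith
  -- with k = -1, the RHS vanishes pointwise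
  have hB0 : ∀ X, (2 * (P.n : ℝ) - 2) • P.phi (hL X) - t • (hL X - P.phi (P.phi X)) = 0 := by
    intro X
    have := heq X
    rw [hk] at this
    simpa using this.symm
  -- trace of φ∘φ is 2n
  have hphisq : P.phi ∘ₗ P.phi = LinearMap.id - P.eta.smulRight P.xi := by
    ext X; simp [P.phi_sq]
  have htrphisq : LinearMap.trace ℝ V (P.phi ∘ₗ P.phi) = 2 * (P.n : ℝ) := by
    rw [hphisq, map_sub, LinearMap.trace_id, htr_rank1, hdim]
    push_cast; ring
  -- trace of the vanishing operator gives (4n-2) t = 0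
  have ht0 : t = 0 := by
    have hop : (2 * (P.n : ℝ) - 2) • (P.phi ∘ₗ hL) - t • (hL - P.phi ∘ₗ P.phi) = 0 := by
      ext X
      simpa using hB0 X
    have := congrArg (LinearMap.trace ℝ V) hop
    rw [map_sub, map_smul, map_smul, map_sub, map_zero, htr, htrphisq, ← ht] at this
    simp only [smul_eq_mul] at this
    have h4 : (4 * (P.n : ℝ) - 2) * t = 0 := by nlinarith [this]
    rcases mul_eq_zero.mp h4 with h | h
    · exfalso; nlinarith
    · exact h
  have hphih0 : ∀ X, P.phi (hL X) = 0 := by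
    intro X
    have := hB0 X
    rw [ht0] at this
    simp at this
    rcases this with h | h
    · exact absurd h hfac
    · exact h
  refine ⟨hk, hphih0, ?_⟩
  ext X
  have h1 := P.phi_sq (hL X)
  rw [hphih0 X, map_zero, heta X] at h1
  simp at h1 ⊢
  linear_combination (norm := module) - h1
end

section
/- A conformally flat para-Sasakian manifold of dimension 2n+1 ≥ 5 has constant sectional curvature −1, i.e. R(X,Y)Z = −(g(Y,Z)X − g(X,Z)Y). -/
/-!
Setting `Y = Z = ξ` in the conformal flatness identity and using `R(X,ξ)ξ = η(X)ξ − X`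
shows that the Ricci operator is η-Einstein, `Ric = (1 + r/2n) id − (1 + 2n + r/2n) η ⊗ ξ`.
Substituting this back, `−φR(X,Y)φZ` becomes a multiple of `g(Y,φZ)φX − g(X,φZ)φY`, so the
*-Ricci tensor is a multiple of `g(φ·,φ·)` and `r* = −(4n + r)/(2n − 1)`. Since `n ≠ 1`,
the relation `r + r* + 4n² = 0` forces `r = −2n(2n + 1)`; then `Ric = −2n id` and the
conformal flatness identity reduces to `R(X,Y)Z = −(g(Y,Z)X − g(X,Z)Y)`.
-/

theorem LinearMap.trace_eq_zero_of_separatingLeft {K V : Type*} [Field K] [CharZero K]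
    [AddCommGroup V] [Module K V] [FiniteDimensional K V]
    {B : LinearMap.BilinForm K V} (hB : B.SeparatingLeft) {f : V →ₗ[K] V}
    (hf : ∀ x y, B (f x) y = -B x (f y)) :
    LinearMap.trace K V f = 0 := by
  let e : V ≃ₗ[K] Module.Dual K V := B.linearEquivOfInjective
    (LinearMap.ker_eq_bot.mp (LinearMap.separatingLeft_iff_ker_eq_bot.mp hB))
    Subspace.dual_finrank_eq.symm
  have hconj : e.conj (-f) = Module.Dual.transpose (R := K) f := by
    ext φ y
    obtain ⟨x, rfl⟩ := e.surjective φ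
    have hx : e.symm (B x) = x := e.symm_apply_apply x
    simp [LinearEquiv.conj_apply, Module.Dual.transpose_apply, hx, hf, e]
  have h := LinearMap.trace_conj' (-f) e
  rw [hconj, LinearMap.trace_transpose', map_neg] at h
  exact self_eq_neg.mp h

lemma scalar_eq_of_sum {N r : ℝ} (hN : 1 < N)
    (h : r + -(2 * N) * ((2 * (1 + r / (2 * N)) - r / (2 * N)) / (2 * N - 1)) + 4 * N ^ 2 = 0) :
    r = -(2 * N * (2 * N + 1)) := by
  have hN0 : N ≠ 0 := by positivity
  have h2N : 2 * N - 1 ≠ 0 := by linarith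
  have key : (N - 1) * (r + 2 * N * (2 * N + 1)) = 0 := by
    field_simp at h
    linear_combination h / 2
  rcases mul_eq_zero.mp key with h1 | h1
  · exact absurd h1 (by linarith)
  · linarith

namespace APCM

variable {V : Type*} [AddCommGroup V] [Module ℝ V] (P : APCM V)

def IsConformallyFlat (Ric : V →ₗ[ℝ] V) (r : ℝ) : Prop :=
  ∀ X Y Z, P.R X Y Z
    = (1 / (2 * (P.n : ℝ) - 1))
        • (P.g Y Z • Ric X + P.g (Ric Y) Z • X - P.g X Z • Ric Y - P.g (Ric X) Z • Y)
      - (r / (2 * (P.n : ℝ) * (2 * (P.n : ℝ) - 1))) • (P.g Y Z • X - P.g X Z • Y)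

def IsEtaEinstein (Ric : V →ₗ[ℝ] V) (a b : ℝ) : Prop :=
  ∀ X, Ric X = a • X + (b * P.eta X) • P.xi

lemma g_xi_left (X : V) : P.g P.xi X = P.eta X := by
  rw [P.g_symm, P.eta_g]

lemma g_xi_right (X : V) : P.g X P.xi = P.eta X :=
  (P.eta_g X).symm

lemma ext_g {X Y : V} (h : ∀ W, P.g X W = P.g Y W) : X = Y :=
  sub_eq_zero.mp <| P.g_nondeg _ fun W => by rw [map_sub, LinearMap.sub_apply, h, sub_self]

lemma g_phi_left (X Y : V) : P.g (P.phi X) Y = -P.g X (P.phi Y) := by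
  have h := P.compat X (P.phi Y)
  rw [P.phi_sq, map_sub, map_smul, g_xi_right, P.eta_phi, P.eta_phi] at h
  simpa using h

lemma trace_phi [FiniteDimensional ℝ V] : LinearMap.trace ℝ V P.phi = 0 :=
  LinearMap.trace_eq_zero_of_separatingLeft P.g_nondeg P.g_phi_left

variable {P}

lemma isEtaEinstein_of_isConformallyFlat (hn : P.n ≠ 0) {Ric : V →ₗ[ℝ] V} {r : ℝ}
    (hcf : P.IsConformallyFlat Ric r)
    (hRxi : ∀ X Y, P.R X Y P.xi = P.eta X • Y - P.eta Y • X)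
    (hRicxi : ∀ Y, P.g (Ric P.xi) Y = -(2 * (P.n : ℝ)) * P.eta Y)
    (hxiRic : ∀ X, P.g (Ric X) P.xi = -(2 * (P.n : ℝ)) * P.eta X) :
    P.IsEtaEinstein Ric (1 + r / (2 * P.n)) (-(1 + r / (2 * P.n)) - 2 * P.n) := by
  have hN : (P.n : ℝ) ≠ 0 := Nat.cast_ne_zero.mpr hn
  have h2N : 2 * (P.n : ℝ) - 1 ≠ 0 := by
    have : (1 : ℝ) ≤ P.n := Nat.one_le_cast.mpr (Nat.one_le_iff_ne_zero.mpr hn)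
    linarith
  have hRic_xi : Ric P.xi = -(2 * (P.n : ℝ)) • P.xi :=
    P.ext_g fun W => by rw [hRicxi, map_smul, LinearMap.smul_apply, g_xi_left, smul_eq_mul]
  intro X
  have E := hcf X P.xi P.xi
  simp only [hRxi, hRic_xi, hxiRic, map_smul, LinearMap.smul_apply, g_xi_right, P.eta_xi,
    smul_eq_mul] at E
  linear_combination (norm := skip) (1 - 2 * (P.n : ℝ)) • E
  match_scalars <;> field_simp <;> ring

lemma R_eq_of_isEtaEinstein {Ric : V →ₗ[ℝ] V} {r a b : ℝ} (hcf : P.IsConformallyFlat Ric r)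
    (hE : P.IsEtaEinstein Ric a b) (X Y Z : V) :
    P.R X Y Z = ((2 * a - r / (2 * P.n)) / (2 * P.n - 1)) • (P.g Y Z • X - P.g X Z • Y)
      + (b / (2 * P.n - 1)) • ((P.g Y Z * P.eta X - P.g X Z * P.eta Y) • P.xi
        + (P.eta Y * P.eta Z) • X - (P.eta X * P.eta Z) • Y) := by
  rw [hcf, hE X, hE Y, sub_div, div_div]
  simp only [map_add, map_smul, LinearMap.add_apply, LinearMap.smul_apply, g_xi_left,
    smul_eq_mul]
  match_scalars <;> ring

lemma phi_R_phi_of_isEtaEinstein {Ric : V →ₗ[ℝ] V} {r a b : ℝ}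
    (hcf : P.IsConformallyFlat Ric r) (hE : P.IsEtaEinstein Ric a b) (X Y Z : V) :
    P.phi (P.R X Y (P.phi Z)) = ((2 * a - r / (2 * P.n)) / (2 * P.n - 1))
      • (P.g Y (P.phi Z) • P.phi X - P.g X (P.phi Z) • P.phi Y) := by
  rw [R_eq_of_isEtaEinstein hcf hE]
  simp only [map_add, map_sub, map_smul, P.phi_xi, P.eta_phi, smul_zero, mul_zero, zero_smul,
    add_zero, sub_zero]

variable [FiniteDimensional ℝ V]

lemma g_ric_xi (hdim : Module.finrank ℝ V = 2 * P.n + 1)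
    (hRxi : ∀ X Y, P.R X Y P.xi = P.eta X • Y - P.eta Y • X)
    {Ric : V →ₗ[ℝ] V} {Rfirst : V → V → V →ₗ[ℝ] V}
    (hRfirst : ∀ X Y Z, Rfirst Y Z X = P.R X Y Z)
    (hRic : ∀ Y Z, P.g (Ric Y) Z = LinearMap.trace ℝ V (Rfirst Y Z)) (X : V) :
    P.g (Ric X) P.xi = -(2 * (P.n : ℝ)) * P.eta X := by
  have hR : Rfirst X P.xi = P.eta.smulRight X - P.eta X • LinearMap.id := by
    ext W
    simp [hRfirst, hRxi]
  rw [hRic, hR, map_sub, map_smul, LinearMap.trace_smulRight, LinearMap.trace_id, hdim]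
  push_cast
  simp only [smul_eq_mul]
  ring

lemma g_ricStar_eq {c : ℝ}
    (hc : ∀ X Y Z, P.phi (P.R X Y (P.phi Z))
      = c • (P.g Y (P.phi Z) • P.phi X - P.g X (P.phi Z) • P.phi Y))
    {RicStar : V →ₗ[ℝ] V} {RfirstStar : V → V → V →ₗ[ℝ] V}
    (hRfirstStar : ∀ X Y Z, RfirstStar Y Z X = -(P.phi (P.R X Y (P.phi Z))))
    (hRicStar : ∀ Y Z, P.g (RicStar Y) Z = LinearMap.trace ℝ V (RfirstStar Y Z)) (Y Z : V) :
    P.g (RicStar Y) Z = c * (-P.g Y Z + P.eta Y * P.eta Z) := by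
  have hR : RfirstStar Y Z
      = (-(c * P.g Y (P.phi Z))) • P.phi + (P.g.flip (P.phi Z)).smulRight (c • P.phi Y) := by
    ext X
    rw [hRfirstStar, hc]
    simp only [LinearMap.add_apply, LinearMap.smul_apply, LinearMap.smulRight_apply,
      LinearMap.flip_apply]
    module
  rw [hRicStar, hR, map_add, map_smul, LinearMap.trace_smulRight, P.trace_phi,
    LinearMap.flip_apply, map_smul, LinearMap.smul_apply, P.compat]
  simp only [smul_eq_mul, mul_zero, zero_add]

lemma trace_ricStar_eq (hdim : Module.finrank ℝ V = 2 * P.n + 1) {c : ℝ}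
    (hc : ∀ X Y Z, P.phi (P.R X Y (P.phi Z))
      = c • (P.g Y (P.phi Z) • P.phi X - P.g X (P.phi Z) • P.phi Y))
    {RicStar : V →ₗ[ℝ] V} {RfirstStar : V → V → V →ₗ[ℝ] V}
    (hRfirstStar : ∀ X Y Z, RfirstStar Y Z X = -(P.phi (P.R X Y (P.phi Z))))
    (hRicStar : ∀ Y Z, P.g (RicStar Y) Z = LinearMap.trace ℝ V (RfirstStar Y Z)) :
    LinearMap.trace ℝ V RicStar = -(2 * (P.n : ℝ)) * c := by
  have hRicStar_eq : RicStar = c • (P.eta.smulRight P.xi - LinearMap.id) := by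
    ext Y
    refine P.ext_g fun W => ?_
    simp only [g_ricStar_eq hc hRfirstStar hRicStar, LinearMap.smul_apply, LinearMap.sub_apply,
      LinearMap.smulRight_apply, LinearMap.id_apply, map_smul, map_sub,
      g_xi_left, smul_eq_mul]
    ring
  rw [hRicStar_eq, map_smul, map_sub, LinearMap.trace_smulRight, LinearMap.trace_id, hdim,
    P.eta_xi, smul_eq_mul]
  push_cast
  ring

end APCM

theorem stmt15_general {V : Type*} [AddCommGroup V] [Module ℝ V] [FiniteDimensional ℝ V]
    (P : APCM V) (hdim : Module.finrank ℝ V = 2 * P.n + 1) (hn : 2 ≤ P.n)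
    (hRxi : ∀ X Y, P.R X Y P.xi = P.eta X • Y - P.eta Y • X)
    -- the Ricci operator, defined by a trace of the curvature
    (Ric : V →ₗ[ℝ] V) (Rfirst : V → V → V →ₗ[ℝ] V)
    (hRfirst : ∀ X Y Z, Rfirst Y Z X = P.R X Y Z)
    (hRic : ∀ Y Z, P.g (Ric Y) Z = LinearMap.trace ℝ V (Rfirst Y Z))
    (hRicxi : ∀ Y, P.g (Ric P.xi) Y = -(2 * (P.n : ℝ)) * P.eta Y)
    -- the *-Ricci operator and the scalar and *-scalar curvatures
    (RicStar : V →ₗ[ℝ] V) (RfirstStar : V → V → V →ₗ[ℝ] V)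
    (hRfirstStar : ∀ X Y Z, RfirstStar Y Z X = -(P.phi (P.R X Y (P.phi Z))))
    (hRicStar : ∀ Y Z, P.g (RicStar Y) Z = LinearMap.trace ℝ V (RfirstStar Y Z))
    (r rstar : ℝ)
    (hrstar : rstar = LinearMap.trace ℝ V RicStar)
    (hsum : r + rstar + 4 * (P.n : ℝ) ^ 2 = 0)
    -- conformal flatness
    (hcf : ∀ X Y Z, P.R X Y Z
        = (1 / (2 * (P.n : ℝ) - 1))
            • (P.g Y Z • Ric X + P.g (Ric Y) Z • X
                - P.g X Z • Ric Y - P.g (Ric X) Z • Y)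
          - (r / (2 * (P.n : ℝ) * (2 * (P.n : ℝ) - 1)))
            • (P.g Y Z • X - P.g X Z • Y)) :
    ∀ X Y Z, P.R X Y Z = -(P.g Y Z • X - P.g X Z • Y) := by
  have hE := APCM.isEtaEinstein_of_isConformallyFlat (by omega) hcf hRxi hRicxi
    (APCM.g_ric_xi hdim hRxi hRfirst hRic)
  have hrstar_eq := APCM.trace_ricStar_eq hdim (APCM.phi_R_phi_of_isEtaEinstein hcf hE)
    hRfirstStar hRicStar
  have hr : r = -(2 * P.n * (2 * P.n + 1)) :=
    scalar_eq_of_sum (by exact_mod_cast hn) (by rwa [← hrstar_eq, ← hrstar])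
  intro X Y Z
  rw [APCM.R_eq_of_isEtaEinstein hcf hE, hr]
  have h2N : 2 * (P.n : ℝ) - 1 ≠ 0 := by
    have : (2 : ℝ) ≤ P.n := by exact_mod_cast hn
    linarith
  match_scalars <;> field_simp <;> ring

/-- A conformally flat para-Sasakian manifold of dimension
`2n+1 ≥ 5` has constant sectional curvature `−1`:
`R(X,Y)Z = −(g(Y,Z)X − g(X,Z)Y)`. -/
theorem stmt15 {V : Type*} [AddCommGroup V] [Module ℝ V] [FiniteDimensional ℝ V]
    (P : APCM V) (hdim : Module.finrank ℝ V = 2 * P.n + 1) (hn : 2 ≤ P.n)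
    (hsas : P.IsParaSasakian)
    (hnxi : ∀ X, P.nabla X P.xi = -(P.phi X))
    (hRxi : ∀ X Y, P.R X Y P.xi = P.eta X • Y - P.eta Y • X)
    -- the Ricci operator, defined by a trace of the curvature
    (Ric : V →ₗ[ℝ] V) (Rfirst : V → V → V →ₗ[ℝ] V)
    (hRfirst : ∀ X Y Z, Rfirst Y Z X = P.R X Y Z)
    (hRic : ∀ Y Z, P.g (Ric Y) Z = LinearMap.trace ℝ V (Rfirst Y Z))
    (hRicxi : ∀ Y, P.g (Ric P.xi) Y = -(2 * (P.n : ℝ)) * P.eta Y)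
    -- the *-Ricci operator and the scalar and *-scalar curvatures
    (RicStar : V →ₗ[ℝ] V) (RfirstStar : V → V → V →ₗ[ℝ] V)
    (hRfirstStar : ∀ X Y Z, RfirstStar Y Z X = -(P.phi (P.R X Y (P.phi Z))))
    (hRicStar : ∀ Y Z, P.g (RicStar Y) Z = LinearMap.trace ℝ V (RfirstStar Y Z))
    (r rstar : ℝ)
    (hr : r = LinearMap.trace ℝ V Ric)
    (hrstar : rstar = LinearMap.trace ℝ V RicStar)
    (hsum : r + rstar + 4 * (P.n : ℝ) ^ 2 = 0)
    -- conformal flatness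
    (hcf : ∀ X Y Z, P.R X Y Z
        = (1 / (2 * (P.n : ℝ) - 1))
            • (P.g Y Z • Ric X + P.g (Ric Y) Z • X
                - P.g X Z • Ric Y - P.g (Ric X) Z • Y)
          - (r / (2 * (P.n : ℝ) * (2 * (P.n : ℝ) - 1)))
            • (P.g Y Z • X - P.g X Z • Y)) :
    ∀ X Y Z, P.R X Y Z = -(P.g Y Z • X - P.g X Z • Y) :=
  stmt15_general P hdim hn hRxi Ric Rfirst hRfirst hRic hRicxi RicStar RfirstStar hRfirstStar
    hRicStar r rstar hrstar hsum hcf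
end
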